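/- arXiv:1403.4457 — 7 statements merged into one kernel-verified Lean document; each statement's English description precedes it below -/
import Mathlib

section
/- Let r₁, r₃, k₁, k₃, m₁₃, m₃₁ > 0 with r₁ > m₃₁. Define φ(P₁) = (P₁/m₁₃)·(m₃₁ − r₁·(1 − P₁/k₁)) and ψ(P₃) = (P₃/m₃₁)·(m₁₃ − r₃·(1 − P₃/k₃)). Then there exist P₁ > 0 and P₃ > 0 with P₃ = φ(P₁) and P₁ = ψ(P₃). -/
/-!
With `φ` and `ψ` the two parabolae, look for a zero of `x ↦ ψ (φ x) - x` to the right of the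
positive root `a = k₁ (1 - m₃₁ / r₁)` of `φ`. At `a` it equals `-a < 0`, because `ψ 0 = 0`.
For `x ≥ k₁` the logistic factor of `φ` is non-negative, so `φ x ≥ (m₃₁ / m₁₃) x`, and likewise
`ψ y ≥ (m₁₃ / m₃₁) y` for `y ≥ k₃`; hence `ψ (φ x) ≥ x` once `x` is large. The intermediate value
theorem yields a zero `x > a`, and `φ x > 0` there since `φ` is positive beyond its root.
-/

theorem exists_pos_pair_of_comp_ge {f g : ℝ → ℝ} (hf : Continuous f) (hg : Continuous g)
    {a b : ℝ} (ha : 0 < a) (hab : a ≤ b) (hfa : f a = 0) (hg0 : g 0 = 0)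
    (hf_pos : ∀ x, a < x → 0 < f x) (hb : b ≤ g (f b)) :
    ∃ x y, 0 < x ∧ 0 < y ∧ y = f x ∧ x = g y := by
  have hzero : (0 : ℝ) ∈ Set.Ioc (g (f a) - a) (g (f b) - b) := by
    rw [hfa, hg0]
    exact ⟨by linarith, by linarith⟩
  obtain ⟨x, ⟨hax, -⟩, hx⟩ :=
    intermediate_value_Ioc hab ((hg.comp hf).sub continuous_id).continuousOn hzero
  exact ⟨x, f x, ha.trans hax, hf_pos x hax, rfl, (sub_eq_zero.mp hx).symm⟩

/-- `P₃ = nullcline m₁₃ m₃₁ r₁ k₁ P₁` is the first equilibrium equation solved for `P₃`. -/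
noncomputable def nullcline (a b r k x : ℝ) : ℝ := x / a * (b - r * (1 - x / k))

section Nullcline

variable {a b r k x : ℝ}

theorem continuous_nullcline : Continuous (nullcline a b r k) := by
  unfold nullcline
  fun_prop

theorem nullcline_root (hr : r ≠ 0) (hk : k ≠ 0) : nullcline a b r k (k * (1 - b / r)) = 0 := by
  unfold nullcline
  field_simp
  ring

theorem nullcline_pos (ha : 0 < a) (hr : 0 < r) (hk : 0 < k) (hx : 0 < x)
    (hroot : k * (1 - b / r) < x) : 0 < nullcline a b r k x := by
  have hfactor : 0 < b - r * (1 - x / k) := by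
    rw [show k * (1 - b / r) = k * (r - b) / r by field_simp, div_lt_iff₀ hr] at hroot
    rw [show b - r * (1 - x / k) = (x * r - k * (r - b)) / k by field_simp; ring]
    exact div_pos (by linarith) hk
  exact mul_pos (div_pos hx ha) hfactor

theorem le_nullcline (ha : 0 < a) (hr : 0 ≤ r) (hk : 0 < k) (hx : k ≤ x) :
    b / a * x ≤ nullcline a b r k x := by
  have hlog : 1 - x / k ≤ 0 := by rw [sub_nonpos, one_le_div hk]; exact hx
  calc b / a * x = x / a * b := by ring
    _ ≤ x / a * (b - r * (1 - x / k)) := by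
      gcongr
      · exact div_nonneg (hk.le.trans hx) ha.le
      · nlinarith

end Nullcline

theorem self_le_nullcline_nullcline {a b r r' k k' x : ℝ} (ha : 0 < a) (hb : 0 < b)
    (hr : 0 ≤ r) (hr' : 0 ≤ r') (hk : 0 < k) (hk' : 0 < k') (hxk : k ≤ x)
    (hxk' : a / b * k' ≤ x) : x ≤ nullcline b a r' k' (nullcline a b r k x) := by
  have hinner : b / a * x ≤ nullcline a b r k x := le_nullcline ha hr hk hxk
  have hk'_le : k' ≤ nullcline a b r k x := by
    calc k' = b / a * (a / b * k') := by field_simp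
      _ ≤ b / a * x := by gcongr
      _ ≤ _ := hinner
  calc x = a / b * (b / a * x) := by field_simp
    _ ≤ a / b * nullcline a b r k x := by gcongr
    _ ≤ _ := le_nullcline hb hr' hk' hk'_le

/-- Existence of the patch-2-free equilibrium `Q₁` with strictly positive
components: the two convex parabolae given by the first and third equilibrium
equations intersect in the open first quadrant when `r₁ > m₃₁`. -/
theorem patch2_free_equilibrium_exists
    (r₁ r₃ k₁ k₃ m₁₃ m₃₁ : ℝ)
    (hr₁ : 0 < r₁) (hr₃ : 0 < r₃) (hk₁ : 0 < k₁) (hk₃ : 0 < k₃)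
    (hm₁₃ : 0 < m₁₃) (hm₃₁ : 0 < m₃₁) (hfeas : m₃₁ < r₁) :
    ∃ P₁ P₃ : ℝ, 0 < P₁ ∧ 0 < P₃ ∧
      P₃ = (P₁ / m₁₃) * (m₃₁ - r₁ * (1 - P₁ / k₁)) ∧
      P₁ = (P₃ / m₃₁) * (m₁₃ - r₃ * (1 - P₃ / k₃)) := by
  have hroot_pos : 0 < k₁ * (1 - m₃₁ / r₁) :=
    mul_pos hk₁ (sub_pos.mpr ((div_lt_one hr₁).mpr hfeas))
  have hroot_le : k₁ * (1 - m₃₁ / r₁) ≤ k₁ :=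
    mul_le_of_le_one_right hk₁.le (sub_le_self _ (div_pos hm₃₁ hr₁).le)
  have hb : k₁ ≤ max k₁ (m₁₃ / m₃₁ * k₃) := le_max_left _ _
  exact exists_pos_pair_of_comp_ge continuous_nullcline continuous_nullcline hroot_pos
    (hroot_le.trans hb) (nullcline_root hr₁.ne' hk₁.ne') (by simp)
    (fun x hx => nullcline_pos hm₁₃ hr₁ hk₁ (hroot_pos.trans hx) hx)
    (self_le_nullcline_nullcline hm₁₃ hm₃₁ hr₁.le hr₃.le hk₁ hk₃ hb (le_max_right _ _))
end

section
/- Let r₁, r₂, r₃, k₁, k₂, k₃ > 0 and m₁₂, m₁₃, m₃₂ > 0, with r₂ > m₁₂ + m₃₂. Define P₂* = (k₂/r₂)(r₂ − m₃₂ − m₁₂), P₃* = (k₃/(2r₃))[r₃ − m₁₃ + sqrt((r₃ − m₁₃)² + (4/k₃)r₃m₃₂P₂*)], and P₁* = (k₁/2)[1 + sqrt(1 + (4/(k₁r₁))(m₁₂P₂* + m₁₃P₃*))]. Then P₁* > 0, P₂* > 0, P₃* > 0, and (P₁*, P₂*, P₃*) satisfies the three equilibrium equations r₁P₁*(1 −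 P₁*/k₁) + m₁₂P₂* + m₁₃P₃* = 0 (i.e. P₁* is the positive root of r₁x(1 − x/k₁) + m₁₂P₂* + m₁₃P₃* = 0), r₂P₂*(1 − P₂*/k₂) − m₃₂P₂* − m₁₂P₂* = 0, and r₃P₃*(1 − P₃*/k₃) + m₃₂P₂* − m₁₃P₃* = 0. -/
/-- The explicit triple is a strictly positive coexistence equilibrium of
model (6) (`m₂₁ = m₃₁ = m₂₃ = 0`) under the feasibility condition
`r₂ > m₁₂ + m₃₂`. -/
theorem model6_coexistence_equilibrium
    (r₁ r₂ r₃ k₁ k₂ k₃ m₁₂ m₁₃ m₃₂ : ℝ)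
    (hr₁ : 0 < r₁) (hr₂ : 0 < r₂) (hr₃ : 0 < r₃)
    (hk₁ : 0 < k₁) (hk₂ : 0 < k₂) (hk₃ : 0 < k₃)
    (hm₁₂ : 0 < m₁₂) (hm₁₃ : 0 < m₁₃) (hm₃₂ : 0 < m₃₂)
    (hfeas : m₁₂ + m₃₂ < r₂)
    (P₁ P₂ P₃ : ℝ)
    (hP₂ : P₂ = (k₂ / r₂) * (r₂ - m₃₂ - m₁₂))
    (hP₃ : P₃ = (k₃ / (2 * r₃)) *
      (r₃ - m₁₃ + Real.sqrt ((r₃ - m₁₃) ^ 2 + (4 / k₃) * r₃ * m₃₂ * P₂)))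
    (hP₁ : P₁ = (k₁ / 2) *
      (1 + Real.sqrt (1 + (4 / (k₁ * r₁)) * (m₁₂ * P₂ + m₁₃ * P₃)))) :
    0 < P₁ ∧ 0 < P₂ ∧ 0 < P₃ ∧
    r₁ * P₁ * (1 - P₁ / k₁) + m₁₂ * P₂ + m₁₃ * P₃ = 0 ∧
    r₂ * P₂ * (1 - P₂ / k₂) - m₃₂ * P₂ - m₁₂ * P₂ = 0 ∧
    r₃ * P₃ * (1 - P₃ / k₃) + m₃₂ * P₂ - m₁₃ * P₃ = 0 := by
  have hP2pos : 0 < P₂ := by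
    rw [hP₂]
    have : 0 < r₂ - m₃₂ - m₁₂ := by linarith
    positivity
  have heq2 : r₂ * P₂ * (1 - P₂ / k₂) - m₃₂ * P₂ - m₁₂ * P₂ = 0 := by
    rw [hP₂]
    field_simp
    ring
  -- patch 3
  have hD₃pos : (0:ℝ) < (r₃ - m₁₃) ^ 2 + (4 / k₃) * r₃ * m₃₂ * P₂ := by positivity
  obtain ⟨s₃, hs₃def⟩ : ∃ s, Real.sqrt ((r₃ - m₁₃) ^ 2 + (4 / k₃) * r₃ * m₃₂ * P₂) = s :=
    ⟨_, rfl⟩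
  have hs₃nn : 0 ≤ s₃ := hs₃def ▸ Real.sqrt_nonneg _
  have hs₃ : s₃ ^ 2 = (r₃ - m₁₃) ^ 2 + (4 / k₃) * r₃ * m₃₂ * P₂ := by
    rw [← hs₃def]; exact Real.sq_sqrt hD₃pos.le
  have hs₃' : k₃ * s₃ ^ 2 = k₃ * (r₃ - m₁₃) ^ 2 + 4 * r₃ * m₃₂ * P₂ := by
    rw [hs₃]; field_simp; try ring
  rw [hs₃def] at hP₃
  have hq3 : 0 < (4 / k₃) * r₃ * m₃₂ * P₂ := by positivity
  have hsum3 : 0 < r₃ - m₁₃ + s₃ := by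
    nlinarith [hs₃, hs₃nn, hq3, sq_nonneg (r₃ - m₁₃ + s₃)]
  have hP3pos : 0 < P₃ := by rw [hP₃]; positivity
  have heq3 : r₃ * P₃ * (1 - P₃ / k₃) + m₃₂ * P₂ - m₁₃ * P₃ = 0 := by
    rw [hP₃]
    have hk₃' : k₃ ≠ 0 := ne_of_gt hk₃
    have hr₃' : r₃ ≠ 0 := ne_of_gt hr₃
    field_simp
    linear_combination (-1) * hs₃'
  -- patch 1
  have hD₁pos : (0:ℝ) < 1 + (4 / (k₁ * r₁)) * (m₁₂ * P₂ + m₁₃ * P₃) := by positivity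
  obtain ⟨s₁, hs₁def⟩ : ∃ s, Real.sqrt (1 + (4 / (k₁ * r₁)) * (m₁₂ * P₂ + m₁₃ * P₃)) = s :=
    ⟨_, rfl⟩
  have hs₁nn : 0 ≤ s₁ := hs₁def ▸ Real.sqrt_nonneg _
  have hs₁ : s₁ ^ 2 = 1 + (4 / (k₁ * r₁)) * (m₁₂ * P₂ + m₁₃ * P₃) := by
    rw [← hs₁def]; exact Real.sq_sqrt hD₁pos.le
  have hs₁' : k₁ * r₁ * s₁ ^ 2 = k₁ * r₁ + 4 * (m₁₂ * P₂ + m₁₃ * P₃) := by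
    rw [hs₁]; field_simp; try ring
  rw [hs₁def] at hP₁
  have hP1pos : 0 < P₁ := by
    rw [hP₁]
    have h1 : 0 < 1 + s₁ := by linarith
    positivity
  have heq1 : r₁ * P₁ * (1 - P₁ / k₁) + m₁₂ * P₂ + m₁₃ * P₃ = 0 := by
    rw [hP₁]
    have hk₁' : k₁ ≠ 0 := ne_of_gt hk₁
    field_simp
    linear_combination (-1) * hs₁'
  exact ⟨hP1pos, hP2pos, hP3pos, heq1, heq2, heq3⟩
end

section
/- Let r₁, r₂, r₃, k₁, k₂, k₃, m₂₁, m₂₃ > 0 with r₁ > m₂₁ and r₃ > m₂₃. Define P₁* = (k₁/r₁)(r₁ − m₂₁), P₃* = (k₃/r₃)(r₃ − m₂₃), and P₂* = (k₂/(2r₂))[r₂ + sqrt(r₂² + (4/k₂)r₂(m₂₁P₁* + m₂₃P₃*))]. Then P₁*, P₂*, P₃* > 0 and they satisfy r₁P₁*(1 − P₁*/k₁) − m₂₁P₁* = 0, r₂P₂*(1 − P₂*/k₂) + m₂₁P₁* + m₂₃P₃* = 0, r₃P₃*(1 − P₃*/k₃) − m₂₃P₃* = 0. -/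
/-!
Patches 1 and 3 only lose individuals, so each decouples into a logistic equation with a linear
emigration term, whose nonzero root is `k (r - m) / r`. Patch 2 receives the constant inflow
`I = m₂₁ P₁* + m₂₃ P₃*` and its equilibrium equation `r P (1 - P / k) + I = 0` is a quadratic;
`P₂*` is its larger root, positive because the square root of the discriminant is at least `r₂`.
-/

noncomputable section

def sourceEquilibrium (r k m : ℝ) : ℝ := k / r * (r - m)

def sinkEquilibrium (r k I : ℝ) : ℝ := k / (2 * r) * (r + Real.sqrt (r ^ 2 + 4 / k * r * I))

end

theorem sourceEquilibrium_pos {r k m : ℝ} (hr : 0 < r) (hk : 0 < k) (hm : m < r) :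
    0 < sourceEquilibrium r k m :=
  mul_pos (div_pos hk hr) (sub_pos.mpr hm)

theorem sourceEquilibrium_isRoot {r k m : ℝ} (hr : r ≠ 0) (hk : k ≠ 0) :
    r * sourceEquilibrium r k m * (1 - sourceEquilibrium r k m / k)
      - m * sourceEquilibrium r k m = 0 := by
  unfold sourceEquilibrium
  field_simp
  ring

theorem sinkEquilibrium_pos {r k I : ℝ} (hr : 0 < r) (hk : 0 < k) :
    0 < sinkEquilibrium r k I := by
  unfold sinkEquilibrium
  positivity

theorem logistic_add_eq_zero_of_sq_eq {r k I s : ℝ} (hr : r ≠ 0) (hk : k ≠ 0)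
    (hs : s ^ 2 = r ^ 2 + 4 / k * r * I) :
    r * (k / (2 * r) * (r + s)) * (1 - k / (2 * r) * (r + s) / k) + I = 0 := by
  have residual : r * (k / (2 * r) * (r + s)) * (1 - k / (2 * r) * (r + s) / k) + I
      = k / (4 * r) * (r ^ 2 + 4 / k * r * I - s ^ 2) := by
    field_simp
    ring
  rw [residual, hs, sub_self, mul_zero]

theorem sinkEquilibrium_isRoot {r k I : ℝ} (hr : r ≠ 0) (hk : k ≠ 0)
    (hdisc : 0 ≤ r ^ 2 + 4 / k * r * I) :
    r * sinkEquilibrium r k I * (1 - sinkEquilibrium r k I / k) + I = 0 :=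
  logistic_add_eq_zero_of_sq_eq hr hk (Real.sq_sqrt hdisc)

/-- The explicit triple is a strictly positive coexistence equilibrium of
model (n2) (`P₁ → P₂ ← P₃`) under the feasibility conditions
`r₁ > m₂₁` and `r₃ > m₂₃`. -/
theorem modeln2_coexistence_equilibrium
    (r₁ r₂ r₃ k₁ k₂ k₃ m₂₁ m₂₃ : ℝ)
    (hr₁ : 0 < r₁) (hr₂ : 0 < r₂) (hr₃ : 0 < r₃)
    (hk₁ : 0 < k₁) (hk₂ : 0 < k₂) (hk₃ : 0 < k₃)
    (hm₂₁ : 0 < m₂₁) (hm₂₃ : 0 < m₂₃)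
    (hf₁ : m₂₁ < r₁) (hf₃ : m₂₃ < r₃)
    (P₁ P₂ P₃ : ℝ)
    (hP₁ : P₁ = (k₁ / r₁) * (r₁ - m₂₁))
    (hP₃ : P₃ = (k₃ / r₃) * (r₃ - m₂₃))
    (hP₂ : P₂ = (k₂ / (2 * r₂)) *
      (r₂ + Real.sqrt (r₂ ^ 2 + (4 / k₂) * r₂ * (m₂₁ * P₁ + m₂₃ * P₃)))) :
    0 < P₁ ∧ 0 < P₂ ∧ 0 < P₃ ∧
    r₁ * P₁ * (1 - P₁ / k₁) - m₂₁ * P₁ = 0 ∧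
    r₂ * P₂ * (1 - P₂ / k₂) + m₂₁ * P₁ + m₂₃ * P₃ = 0 ∧
    r₃ * P₃ * (1 - P₃ / k₃) - m₂₃ * P₃ = 0 := by
  replace hP₁ : P₁ = sourceEquilibrium r₁ k₁ m₂₁ := hP₁
  replace hP₃ : P₃ = sourceEquilibrium r₃ k₃ m₂₃ := hP₃
  replace hP₂ : P₂ = sinkEquilibrium r₂ k₂ (m₂₁ * P₁ + m₂₃ * P₃) := hP₂
  have hP₁pos : 0 < P₁ := hP₁ ▸ sourceEquilibrium_pos hr₁ hk₁ hf₁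
  have hP₃pos : 0 < P₃ := hP₃ ▸ sourceEquilibrium_pos hr₃ hk₃ hf₃
  have hdisc : 0 ≤ r₂ ^ 2 + 4 / k₂ * r₂ * (m₂₁ * P₁ + m₂₃ * P₃) := by positivity
  refine ⟨hP₁pos, hP₂ ▸ sinkEquilibrium_pos hr₂ hk₂, hP₃pos,
    hP₁ ▸ sourceEquilibrium_isRoot hr₁.ne' hk₁.ne', ?_,
    hP₃ ▸ sourceEquilibrium_isRoot hr₃.ne' hk₃.ne'⟩
  rw [add_assoc, hP₂]
  exact sinkEquilibrium_isRoot hr₂.ne' hk₂.ne' hdisc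
end

section
/- Let r₁, r₂, r₃, k₁, k₂, k₃, m₂₁, m₂₃ > 0 with r₁ > m₂₁ and r₃ > m₂₃, and let (P₁*, P₂*, P₃*) be the coexistence equilibrium of model (n2). Then the Jacobian of the system at this equilibrium, which is lower/upper triangular with diagonal entries J₁₁ = −(r₁/k₁)P₁*, J₂₂ = −(r₂/k₂)P₂* − (m₂₁/P₂*)P₁* − (m₂₃/P₂*)P₃*, J₃₃ = −(r₃/k₃)P₃*, has all three eigenvalues strictly negative; hence the equilibrium is locally asymptotically stable whenever it is feasible. -/
/-!
Each patch is logistic, `P' = r P (1 - P/k) + c P + S`, with a linear emigration rate `c` or a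
constant immigration `S`. Dividing the equilibrium relation by `P` turns the Jacobian diagonal
entry `r - 2 r P / k + c` into `-(r/k) P - S/P`, which is negative for positive data. Since only
the sink patch receives migrants, the Jacobian is triangular after ordering the patches
(P₂, P₁, P₃), so its spectrum is its diagonal.
-/

open Polynomial

namespace Matrix

variable {n K α : Type*} [Fintype n] [DecidableEq n] [Field K] [LinearOrder α]

theorem BlockTriangular.charpoly_of_injective {M : Matrix n n K} {b : n → α}
    (hb : Function.Injective b) (hM : M.BlockTriangular b) :
    M.charpoly = ∏ i, (X - C (M i i)) :=
  letI : LinearOrder n := LinearOrder.lift' b hb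
  charpoly_of_isUpperTriangular M hM

theorem BlockTriangular.mem_spectrum_iff_of_injective {M : Matrix n n K} {b : n → α}
    (hb : Function.Injective b) (hM : M.BlockTriangular b) {μ : K} :
    μ ∈ spectrum K M ↔ ∃ i, M i i = μ := by
  rw [mem_spectrum_iff_isRoot_charpoly, hM.charpoly_of_injective hb, IsRoot, eval_prod,
    Finset.prod_eq_zero_iff]
  simp [sub_eq_zero, eq_comm]

end Matrix

section Logistic

variable {r k c S P : ℝ}

theorem logistic_jacobian_diag_of_equilibrium (hP : P ≠ 0)
    (heq : r * P * (1 - P / k) + c * P + S = 0) :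
    r - 2 * r * P / k + c = -(r / k) * P - S / P := by
  have : r - r * P / k + c + S / P = 0 := by
    field_simp
    linear_combination heq
  linear_combination this

theorem logistic_emigration_equilibrium {m : ℝ} (hr : r ≠ 0)
    (hP : P = (k / r) * (r - m)) :
    r * P * (1 - P / k) + (-m) * P + 0 = 0 := by
  rcases eq_or_ne k 0 with rfl | hk
  · simp [hP]
  · subst hP
    field_simp
    ring

theorem logistic_immigration_equilibrium (hr : 0 < r) (hk : 0 < k) (hS : 0 ≤ S)
    (hP : P = (k / (2 * r)) * (r + √(r ^ 2 + (4 / k) * r * S))) :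
    r * P * (1 - P / k) + 0 * P + S = 0 := by
  have hsq : √(r ^ 2 + (4 / k) * r * S) ^ 2 = r ^ 2 + (4 / k) * r * S :=
    Real.sq_sqrt (by positivity)
  subst hP
  generalize √(r ^ 2 + (4 / k) * r * S) = s at hsq ⊢
  field_simp at hsq ⊢
  linear_combination -hsq

theorem logistic_immigration_equilibrium_pos (hr : 0 < r) (hk : 0 < k)
    (hP : P = (k / (2 * r)) * (r + √(r ^ 2 + (4 / k) * r * S))) : 0 < P := by
  rw [hP]
  positivity

theorem logistic_jacobian_diag_neg (hr : 0 < r) (hk : 0 < k) (hP : 0 < P) (hS : 0 ≤ S) :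
    -(r / k) * P - S / P < 0 := by
  have : 0 < r / k * P := by positivity
  have : 0 ≤ S / P := by positivity
  linarith

end Logistic

/-- At the coexistence equilibrium of model (n2), the Jacobian is triangular
with the stated strictly negative diagonal entries, so all three eigenvalues
are strictly negative: the equilibrium is locally asymptotically stable
whenever feasible. -/
theorem modeln2_coexistence_stable
    (r₁ r₂ r₃ k₁ k₂ k₃ m₂₁ m₂₃ : ℝ)
    (hr₁ : 0 < r₁) (hr₂ : 0 < r₂) (hr₃ : 0 < r₃)
    (hk₁ : 0 < k₁) (hk₂ : 0 < k₂) (hk₃ : 0 < k₃)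
    (hm₂₁ : 0 < m₂₁) (hm₂₃ : 0 < m₂₃)
    (hf₁ : m₂₁ < r₁) (hf₃ : m₂₃ < r₃)
    (P₁ P₂ P₃ : ℝ)
    (hP₁ : P₁ = (k₁ / r₁) * (r₁ - m₂₁))
    (hP₃ : P₃ = (k₃ / r₃) * (r₃ - m₂₃))
    (hP₂ : P₂ = (k₂ / (2 * r₂)) *
      (r₂ + Real.sqrt (r₂ ^ 2 + (4 / k₂) * r₂ * (m₂₁ * P₁ + m₂₃ * P₃))))
    (J : Matrix (Fin 3) (Fin 3) ℝ)
    (hJ : J = !![r₁ - 2 * r₁ * P₁ / k₁ - m₂₁, 0, 0;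
                 m₂₁, r₂ - 2 * r₂ * P₂ / k₂, m₂₃;
                 0, 0, r₃ - 2 * r₃ * P₃ / k₃ - m₂₃]) :
    J 0 0 = -(r₁ / k₁) * P₁ ∧
    J 1 1 = -(r₂ / k₂) * P₂ - (m₂₁ / P₂) * P₁ - (m₂₃ / P₂) * P₃ ∧
    J 2 2 = -(r₃ / k₃) * P₃ ∧
    J 0 0 < 0 ∧ J 1 1 < 0 ∧ J 2 2 < 0 ∧
    (∀ μ ∈ spectrum ℂ (J.map (Complex.ofReal)), μ.re < 0) := by
  have hP₁pos : 0 < P₁ := hP₁ ▸ mul_pos (by positivity) (sub_pos.mpr hf₁)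
  have hP₃pos : 0 < P₃ := hP₃ ▸ mul_pos (by positivity) (sub_pos.mpr hf₃)
  have hS : 0 ≤ m₂₁ * P₁ + m₂₃ * P₃ := by positivity
  have hP₂pos := logistic_immigration_equilibrium_pos hr₂ hk₂ hP₂
  have hJ₀₀ : J 0 0 = -(r₁ / k₁) * P₁ := by
    simpa [hJ, sub_eq_add_neg] using logistic_jacobian_diag_of_equilibrium hP₁pos.ne'
      (logistic_emigration_equilibrium hr₁.ne' hP₁)
  have hJ₂₂ : J 2 2 = -(r₃ / k₃) * P₃ := by
    simpa [hJ, sub_eq_add_neg] using logistic_jacobian_diag_of_equilibrium hP₃pos.ne'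
      (logistic_emigration_equilibrium hr₃.ne' hP₃)
  have hJ₁₁ : J 1 1 = -(r₂ / k₂) * P₂ - (m₂₁ * P₁ + m₂₃ * P₃) / P₂ := by
    simpa [hJ] using logistic_jacobian_diag_of_equilibrium hP₂pos.ne'
      (logistic_immigration_equilibrium hr₂ hk₂ hS hP₂)
  have hJ₀₀neg : J 0 0 < 0 := by
    simpa [hJ₀₀] using logistic_jacobian_diag_neg hr₁ hk₁ hP₁pos le_rfl
  have hJ₁₁neg : J 1 1 < 0 := hJ₁₁ ▸ logistic_jacobian_diag_neg hr₂ hk₂ hP₂pos hS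
  have hJ₂₂neg : J 2 2 < 0 := by
    simpa [hJ₂₂] using logistic_jacobian_diag_neg hr₃ hk₃ hP₃pos le_rfl
  have htri : J.BlockTriangular ![1, 0, 2] := by
    intro i j hij
    fin_cases i <;> fin_cases j <;> simp_all
  refine ⟨hJ₀₀, by rw [hJ₁₁]; ring, hJ₂₂, hJ₀₀neg, hJ₁₁neg, hJ₂₂neg, fun μ hμ => ?_⟩
  obtain ⟨i, rfl⟩ := ((htri.map Complex.ofRealHom).mem_spectrum_iff_of_injective
    (by decide)).mp hμ
  fin_cases i <;> simpa
end

section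
/- Let r₁, r₂, r₃, k₁, k₂, k₃, m₁₂, m₃₂ > 0 with r₂ > m₁₂ + m₃₂. Define P₂* = (k₂/r₂)(r₂ − m₁₂ − m₃₂), P₁* = (k₁/(2r₁))[r₁ + sqrt(r₁² + (4/k₁)r₁m₁₂P₂*)], P₃* = (k₃/(2r₃))[r₃ + sqrt(r₃² + (4/k₃)r₃m₃₂P₂*)]. Then (P₁*, P₂*, P₃*) is a strictly positive equilibrium of the system P₁' = r₁P₁(1 − P₁/k₁) + m₁₂P₂, P₂' = r₂P₂(1 − P₂/k₂) − (m₁₂ + m₃₂)P₂, P₃' = r₃P₃(1 − P₃/k₃) + m₃₂P₂, and the three eigenvalues of the Jacobian there, namely −(r₁/k₁)P₁* − (m₁₂/P₁*)P₂*, −(r₂/k₂)P₂*, and −(r₃/k₃)P₃* − (m₃₂/P₃*)P₂*, are all strictly negative. -/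
/-!
The source patch `P₂` is a logistic population with emigration rate `m₁₂ + m₃₂`, so `P₂*` is
its positive logistic equilibrium, which exists exactly when `r₂ > m₁₂ + m₃₂`. Each sink patch
is a logistic population with constant immigration `m P₂*`; its equilibrium `P*` is the larger
root of `r P (1 - P / k) + m P₂* = 0`, and at that root the diagonal Jacobian entry
`r - 2 r P / k` equals `-(r / k) P - m P₂* / P < 0`. Listing the source patch last makes the
Jacobian upper triangular, so its eigenvalues are its diagonal entries.
-/

open Finset Function

namespace Matrix

variable {n α : Type*} [Fintype n] [DecidableEq n] [LinearOrder α]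

theorem BlockTriangular.det_eq_prod_diag_of_injective {R : Type*} [CommRing R]
    {M : Matrix n n R} {b : n → α} (hM : M.BlockTriangular b) (hb : Injective b) :
    M.det = ∏ i, M i i := by
  rw [hM.det, prod_image fun i _ j _ h => hb h]
  refine prod_congr rfl fun i _ => ?_
  let : Unique { j // b j = b i } := ⟨⟨⟨i, rfl⟩⟩, fun j => Subtype.ext (hb j.2)⟩
  exact det_unique _

theorem BlockTriangular.spectrum_subset_range_diag {K : Type*} [Field K] {M : Matrix n n K}
    {b : n → α} (hM : M.BlockTriangular b) (hb : Injective b) :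
    spectrum K M ⊆ Set.range fun i => M i i := by
  intro μ hμ
  have hdet : ∏ i, (μ - M i i) = 0 := by
    rw [spectrum.mem_iff, isUnit_iff_isUnit_det, isUnit_iff_ne_zero, not_not,
      ((blockTriangular_algebraMap μ).sub hM).det_eq_prod_diag_of_injective hb] at hμ
    simpa [algebraMap_matrix_apply] using hμ
  obtain ⟨i, -, hi⟩ := prod_eq_zero_iff.mp hdet
  exact ⟨i, (sub_eq_zero.mp hi).symm⟩

end Matrix

section Emigration

variable {r k e P : ℝ}

theorem logistic_emigration_eq_zero (hr : r ≠ 0) (hk : k ≠ 0) (hP : P = k / r * (r - e)) :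
    r * P * (1 - P / k) - e * P = 0 := by
  subst hP
  field_simp
  ring

theorem logistic_emigration_diag (hr : r ≠ 0) (hk : k ≠ 0) (hP : P = k / r * (r - e)) :
    r - 2 * r * P / k - e = -(r / k) * P := by
  subst hP
  field_simp
  ring

end Emigration

section Immigration

variable {r k m p P : ℝ}

theorem logistic_immigration_eq_zero (hr : 0 < r) (hk : 0 < k) (hm : 0 ≤ m) (hp : 0 ≤ p)
    (hP : P = k / (2 * r) * (r + √(r ^ 2 + 4 / k * r * m * p))) :
    r * P * (1 - P / k) + m * p = 0 := by
  have hs := Real.sq_sqrt (show 0 ≤ r ^ 2 + 4 / k * r * m * p by positivity)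
  subst hP
  generalize √(r ^ 2 + 4 / k * r * m * p) = s at hs ⊢
  field_simp at hs ⊢
  linear_combination -hs

theorem logistic_immigration_diag (hP : P ≠ 0) (h : r * P * (1 - P / k) + m * p = 0) :
    r - 2 * r * P / k = -(r / k) * P - m / P * p := by
  field_simp
  linear_combination h

theorem logistic_immigration_diag_neg (hr : 0 < r) (hk : 0 < k) (hm : 0 ≤ m) (hp : 0 ≤ p)
    (hP : 0 < P) : -(r / k) * P - m / P * p < 0 := by
  have : 0 < r / k * P := by positivity
  have : 0 ≤ m / P * p := by positivity
  linarith

end Immigration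

open Matrix in
/-- Model (n3) (`P₁ ← P₂ → P₃`): under `r₂ > m₁₂ + m₃₂` the explicit triple is
a strictly positive equilibrium and the three eigenvalues of the Jacobian
there are all strictly negative. -/
theorem modeln3_coexistence_feasible_and_stable
    (r₁ r₂ r₃ k₁ k₂ k₃ m₁₂ m₃₂ : ℝ)
    (hr₁ : 0 < r₁) (hr₂ : 0 < r₂) (hr₃ : 0 < r₃)
    (hk₁ : 0 < k₁) (hk₂ : 0 < k₂) (hk₃ : 0 < k₃)
    (hm₁₂ : 0 < m₁₂) (hm₃₂ : 0 < m₃₂)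
    (hfeas : m₁₂ + m₃₂ < r₂)
    (P₁ P₂ P₃ : ℝ)
    (hP₂ : P₂ = (k₂ / r₂) * (r₂ - m₁₂ - m₃₂))
    (hP₁ : P₁ = (k₁ / (2 * r₁)) *
      (r₁ + Real.sqrt (r₁ ^ 2 + (4 / k₁) * r₁ * m₁₂ * P₂)))
    (hP₃ : P₃ = (k₃ / (2 * r₃)) *
      (r₃ + Real.sqrt (r₃ ^ 2 + (4 / k₃) * r₃ * m₃₂ * P₂)))
    (J : Matrix (Fin 3) (Fin 3) ℝ)
    (hJ : J = !![r₁ - 2 * r₁ * P₁ / k₁, m₁₂, 0;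
                 0, r₂ - 2 * r₂ * P₂ / k₂ - (m₁₂ + m₃₂), 0;
                 0, m₃₂, r₃ - 2 * r₃ * P₃ / k₃]) :
    0 < P₁ ∧ 0 < P₂ ∧ 0 < P₃ ∧
    r₁ * P₁ * (1 - P₁ / k₁) + m₁₂ * P₂ = 0 ∧
    r₂ * P₂ * (1 - P₂ / k₂) - (m₁₂ + m₃₂) * P₂ = 0 ∧
    r₃ * P₃ * (1 - P₃ / k₃) + m₃₂ * P₂ = 0 ∧
    J 0 0 = -(r₁ / k₁) * P₁ - (m₁₂ / P₁) * P₂ ∧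
    J 1 1 = -(r₂ / k₂) * P₂ ∧
    J 2 2 = -(r₃ / k₃) * P₃ - (m₃₂ / P₃) * P₂ ∧
    J 0 0 < 0 ∧ J 1 1 < 0 ∧ J 2 2 < 0 ∧
    (∀ μ ∈ spectrum ℂ (J.map (Complex.ofReal)), μ.re < 0) := by
  have hP₂' : P₂ = k₂ / r₂ * (r₂ - (m₁₂ + m₃₂)) := by rw [hP₂, sub_add_eq_sub_sub]
  have hP₂pos : 0 < P₂ := by
    have : 0 < r₂ - m₁₂ - m₃₂ := by linarith
    rw [hP₂]; positivity
  have hP₁pos : 0 < P₁ := by rw [hP₁]; positivity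
  have hP₃pos : 0 < P₃ := by rw [hP₃]; positivity
  have heq₁ := logistic_immigration_eq_zero hr₁ hk₁ hm₁₂.le hP₂pos.le hP₁
  have heq₃ := logistic_immigration_eq_zero hr₃ hk₃ hm₃₂.le hP₂pos.le hP₃
  have hJ₀₀ : J 0 0 = -(r₁ / k₁) * P₁ - (m₁₂ / P₁) * P₂ := by
    rw [hJ]; exact logistic_immigration_diag hP₁pos.ne' heq₁
  have hJ₁₁ : J 1 1 = -(r₂ / k₂) * P₂ := by
    rw [hJ]; exact logistic_emigration_diag hr₂.ne' hk₂.ne' hP₂'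
  have hJ₂₂ : J 2 2 = -(r₃ / k₃) * P₃ - (m₃₂ / P₃) * P₂ := by
    rw [hJ]; exact logistic_immigration_diag hP₃pos.ne' heq₃
  have hJ_neg : ∀ i, J i i < 0 := by
    intro i
    fin_cases i
    · exact hJ₀₀ ▸ logistic_immigration_diag_neg hr₁ hk₁ hm₁₂.le hP₂pos.le hP₁pos
    · exact hJ₁₁ ▸ mul_neg_of_neg_of_pos (neg_neg_of_pos (by positivity)) hP₂pos
    · exact hJ₂₂ ▸ logistic_immigration_diag_neg hr₃ hk₃ hm₃₂.le hP₂pos.le hP₃pos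
  have hJ_triangular : J.BlockTriangular ![0, 2, 1] := by
    subst hJ
    intro i j hij
    fin_cases i <;> fin_cases j <;> simp_all
  refine ⟨hP₁pos, hP₂pos, hP₃pos, heq₁, logistic_emigration_eq_zero hr₂.ne' hk₂.ne' hP₂',
    heq₃, hJ₀₀, hJ₁₁, hJ₂₂, hJ_neg 0, hJ_neg 1, hJ_neg 2, ?_⟩
  intro μ hμ
  obtain ⟨i, rfl⟩ := (hJ_triangular.map Complex.ofRealHom).spectrum_subset_range_diag
    (by decide) hμ
  exact hJ_neg i
end

section
/- In model (6) (m₂₁ = m₃₁ = m₂₃ = 0, all other parameters positive), the equilibrium I₂ = (k₁, 0, 0) is locally asymptotically stable if and only if r₂ < m₁₂ + m₃₂ and r₃ < m₁₃; moreover, when I₂ is stable, the equilibrium I₃ = (α, 0, β) with β = (k₃/r₃)(r₃ − m₁₃) is infeasible (β < 0) and the coexistence equilibrium is infeasible ((k₂/r₂)(r₂ − m₁₂ − m₃₂) < 0). -/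
namespace Matrix

-- The matrix is upper triangular for the index order `0, 2, 1`.
theorem mem_spectrum_fin_three_iff {K : Type*} [Field K] (a b c d e f μ : K) :
    μ ∈ spectrum K !![a, d, e; 0, b, 0; 0, f, c] ↔ μ = a ∨ μ = b ∨ μ = c := by
  rw [spectrum.mem_iff, isUnit_iff_isUnit_det, isUnit_iff_ne_zero, not_not,
    Algebra.algebraMap_eq_smul_one, det_fin_three]
  simp [sub_eq_zero, eq_comm (a := μ), or_assoc]

theorem map_ofReal_fin_three (a b c d e f : ℝ) :
    (!![a, d, e; 0, b, 0; 0, f, c]).map Complex.ofReal = !![(a : ℂ), d, e; 0, b, 0; 0, f, c] := by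
  ext i j
  fin_cases i <;> fin_cases j <;> simp

theorem forall_mem_spectrum_re_neg_iff (a b c d e f : ℝ) :
    (∀ μ ∈ spectrum ℂ ((!![a, d, e; 0, b, 0; 0, f, c]).map Complex.ofReal), μ.re < 0) ↔
      a < 0 ∧ b < 0 ∧ c < 0 := by
  simp only [map_ofReal_fin_three, mem_spectrum_fin_three_iff]
  constructor
  · intro h
    exact ⟨by simpa using h a (.inl rfl), by simpa using h b (.inr (.inl rfl)),
      by simpa using h c (.inr (.inr rfl))⟩
  · rintro ⟨ha, hb, hc⟩ μ (rfl | rfl | rfl) <;> simpa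

end Matrix

open Matrix in
theorem model6_I2_stability_excludes_other_equilibria_general
    (r₁ r₂ r₃ k₂ k₃ m₁₂ m₁₃ m₃₂ : ℝ)
    (hr₁ : 0 < r₁) (hr₂ : 0 < r₂) (hr₃ : 0 < r₃)
    (hk₂ : 0 < k₂) (hk₃ : 0 < k₃)
    (J : Matrix (Fin 3) (Fin 3) ℝ)
    (hJ : J = !![-r₁, m₁₂, m₁₃;
                 0, r₂ - m₁₂ - m₃₂, 0;
                 0, m₃₂, r₃ - m₁₃]) :
    ((∀ μ ∈ spectrum ℂ (J.map (Complex.ofReal)), μ.re < 0) ↔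
      (r₂ < m₁₂ + m₃₂ ∧ r₃ < m₁₃)) ∧
    (r₂ < m₁₂ + m₃₂ ∧ r₃ < m₁₃ →
      (k₃ / r₃) * (r₃ - m₁₃) < 0 ∧ (k₂ / r₂) * (r₂ - m₁₂ - m₃₂) < 0) := by
  subst hJ
  rw [forall_mem_spectrum_re_neg_iff]
  refine ⟨⟨fun ⟨_, h₂, h₃⟩ ↦ ⟨by linarith, by linarith⟩,
    fun ⟨h₂, h₃⟩ ↦ ⟨by linarith, by linarith, by linarith⟩⟩, fun ⟨h₂, h₃⟩ ↦ ⟨?_, ?_⟩⟩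
  · exact mul_neg_of_pos_of_neg (div_pos hk₃ hr₃) (by linarith)
  · exact mul_neg_of_pos_of_neg (div_pos hk₂ hr₂) (by linarith)

open Matrix in
/-- Model (6): `I₂ = (k₁, 0, 0)` is locally asymptotically stable iff
`r₂ < m₁₂ + m₃₂` and `r₃ < m₁₃`; when it is stable, the equilibrium `I₃`
and the coexistence equilibrium are infeasible. -/
theorem model6_I2_stability_excludes_other_equilibria
    (r₁ r₂ r₃ k₁ k₂ k₃ m₁₂ m₁₃ m₃₂ : ℝ)
    (hr₁ : 0 < r₁) (hr₂ : 0 < r₂) (hr₃ : 0 < r₃)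
    (hk₁ : 0 < k₁) (hk₂ : 0 < k₂) (hk₃ : 0 < k₃)
    (hm₁₂ : 0 < m₁₂) (hm₁₃ : 0 < m₁₃) (hm₃₂ : 0 < m₃₂)
    (J : Matrix (Fin 3) (Fin 3) ℝ)
    (hJ : J = !![-r₁, m₁₂, m₁₃;
                 0, r₂ - m₁₂ - m₃₂, 0;
                 0, m₃₂, r₃ - m₁₃]) :
    ((∀ μ ∈ spectrum ℂ (J.map (Complex.ofReal)), μ.re < 0) ↔
      (r₂ < m₁₂ + m₃₂ ∧ r₃ < m₁₃)) ∧
    (r₂ < m₁₂ + m₃₂ ∧ r₃ < m₁₃ →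
      (k₃ / r₃) * (r₃ - m₁₃) < 0 ∧ (k₂ / r₂) * (r₂ - m₁₂ - m₃₂) < 0) :=
  model6_I2_stability_excludes_other_equilibria_general r₁ r₂ r₃ k₂ k₃ m₁₂ m₁₃ m₃₂ hr₁ hr₂ hr₃ hk₂
    hk₃ J hJ
end

section
/- Consider model (8) (m₂₁ = m₃₁ = 0, all other parameters positive). The point M₂ = (k₁, 0, 0) is an equilibrium; the Jacobian there has one eigenvalue equal to −r₁, and the other two eigenvalues are those of the 2×2 matrix B = [[r₂ − m₁₂ − m₃₂, m₂₃], [m₃₂, r₃ − m₁₃ − m₂₃]]. Both eigenvalues of B have negative real part if and only if r₂ + r₃ < m₁₂ + m₃₂ + m₁₃ + m₂₃ and (r₂ − m₁₂)(r₃ − m₁₃) > (r₂ − m₁₂)m₂₃ + (r₃ − m₁₃)m₃₂. -/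
/-!
Linearizing model (8) at `M₂ = (k₁, 0, 0)`, the first column of the Jacobian vanishes below the
diagonal, so expanding `det (z - J)` along that column splits off the factor `z + r₁` and leaves
the characteristic polynomial `z² - tr B · z + det B` of the lower block. For real `T`, `D` both
complex roots of `z² - T z + D` lie in the open left half-plane iff `T < 0 < D` (Routh–Hurwitz in
degree two); for `B` these are the two stated inequalities.
-/

open Polynomial

namespace Complex

theorem re_neg_of_sq_sub_mul_add_eq_zero {T D : ℝ} (hT : T < 0) (hD : 0 < D) {z : ℂ}
    (hz : z ^ 2 - T * z + D = 0) : z.re < 0 := by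
  have hre := congrArg re hz
  have him := congrArg im hz
  simp only [sq, sub_re, add_re, mul_re, ofReal_re, ofReal_im, sub_im, add_im, mul_im, zero_re,
    zero_im] at hre him
  have him : z.im * (2 * z.re - T) = 0 := by linear_combination him
  rcases mul_eq_zero.mp him with h | h
  · rw [h] at hre
    nlinarith [sq_nonneg z.re]
  · linarith

theorem neg_and_pos_of_forall_sq_sub_mul_add_eq_zero_re_neg {T D : ℝ}
    (h : ∀ z : ℂ, z ^ 2 - T * z + D = 0 → z.re < 0) : T < 0 ∧ 0 < D := by
  obtain ⟨s, hs⟩ := IsAlgClosed.exists_pow_nat_eq ((T : ℂ) ^ 2 - 4 * D) two_pos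
  have hplus := h ((T + s) / 2) (by linear_combination hs / 4)
  have hminus := h ((T - s) / 2) (by linear_combination hs / 4)
  simp only [div_ofNat_re, add_re, ofReal_re, sub_re] at hplus hminus
  have hsq_re : s.re ^ 2 - s.im ^ 2 = T ^ 2 - 4 * D := by
    simpa [sq] using congrArg re hs
  have hsq_im : s.re * s.im = 0 := by
    have := congrArg im hs
    simp only [sq, mul_im, sub_im, ofReal_re, ofReal_im, mul_zero, zero_mul, add_zero, re_ofNat,
      im_ofNat, sub_self] at this
    linarith
  refine ⟨by linarith, ?_⟩
  -- `s² = T² - 4D` is real, so `s` is either purely imaginary or real with `|s| < -T`.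
  rcases mul_eq_zero.mp hsq_im with h0 | h0
  · rw [h0] at hsq_re
    nlinarith
  · rw [h0] at hsq_re
    nlinarith

theorem forall_sq_sub_mul_add_eq_zero_re_neg_iff (T D : ℝ) :
    (∀ z : ℂ, z ^ 2 - T * z + D = 0 → z.re < 0) ↔ T < 0 ∧ 0 < D :=
  ⟨neg_and_pos_of_forall_sq_sub_mul_add_eq_zero_re_neg,
    fun ⟨hT, hD⟩ _ hz ↦ re_neg_of_sq_sub_mul_add_eq_zero hT hD hz⟩

end Complex

namespace Matrix

variable {n : ℕ}

theorem charmatrix_submatrix_succ {R : Type*} [CommRing R]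
    (M : Matrix (Fin (n + 1)) (Fin (n + 1)) R) :
    (charmatrix M).submatrix Fin.succ Fin.succ = charmatrix (M.submatrix Fin.succ Fin.succ) := by
  ext i j
  by_cases h : i = j
  · subst h
    simp
  · simp [charmatrix_apply_ne _ _ _ h, charmatrix_apply_ne _ _ _ (Fin.succ_injective _ |>.ne h)]

theorem charpoly_eq_of_col_zero {R : Type*} [CommRing R]
    (M : Matrix (Fin (n + 1)) (Fin (n + 1)) R) (hM : ∀ i : Fin n, M i.succ 0 = 0) :
    M.charpoly = (X - C (M 0 0)) * (M.submatrix Fin.succ Fin.succ).charpoly := by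
  rw [charpoly, det_succ_column_zero, Fin.sum_univ_succ, Finset.sum_eq_zero, add_zero]
  · simp [← charmatrix_submatrix_succ, charpoly]
  · intro i _
    rw [charmatrix_apply_ne _ _ _ (Fin.succ_ne_zero i), hM]
    simp

theorem spectrum_eq_insert_of_col_zero {K : Type*} [Field K]
    (M : Matrix (Fin (n + 1)) (Fin (n + 1)) K) (hM : ∀ i : Fin n, M i.succ 0 = 0) :
    spectrum K M = insert (M 0 0) (spectrum K (M.submatrix Fin.succ Fin.succ)) := by
  ext z
  simp [mem_spectrum_iff_isRoot_charpoly, charpoly_eq_of_col_zero M hM, sub_eq_zero]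

theorem mem_spectrum_fin_two_iff {K : Type*} [Field K] (A : Matrix (Fin 2) (Fin 2) K) (z : K) :
    z ∈ spectrum K A ↔ z ^ 2 - A.trace * z + A.det = 0 := by
  simp [mem_spectrum_iff_isRoot_charpoly, charpoly_fin_two]

theorem forall_spectrum_map_ofReal_re_neg_iff (A : Matrix (Fin 2) (Fin 2) ℝ) :
    (∀ μ ∈ spectrum ℂ (A.map Complex.ofReal), μ.re < 0) ↔ A.trace < 0 ∧ 0 < A.det := by
  have htrace : (A.map Complex.ofReal).trace = A.trace := by simp [trace_fin_two]
  have hdet : (A.map Complex.ofReal).det = A.det := (Complex.ofRealHom.map_det A).symm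
  simp only [mem_spectrum_fin_two_iff, htrace, hdet]
  exact Complex.forall_sq_sub_mul_add_eq_zero_re_neg_iff _ _

end Matrix

open Matrix in
theorem model8_M2_stability_general
    (r₁ r₂ r₃ k₁ k₂ k₃ m₁₂ m₁₃ m₂₃ m₃₂ : ℝ)
    (J : Matrix (Fin 3) (Fin 3) ℝ)
    (hJ : J = !![-r₁, m₁₂, m₁₃;
                 0, r₂ - m₁₂ - m₃₂, m₂₃;
                 0, m₃₂, r₃ - m₁₃ - m₂₃])
    (B : Matrix (Fin 2) (Fin 2) ℝ)
    (hB : B = !![r₂ - m₁₂ - m₃₂, m₂₃;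
                 m₃₂, r₃ - m₁₃ - m₂₃]) :
    (r₁ * k₁ * (1 - k₁ / k₁) + m₁₂ * 0 + m₁₃ * 0 = 0 ∧
     r₂ * 0 * (1 - 0 / k₂) - (m₁₂ + m₃₂) * 0 + m₂₃ * 0 = 0 ∧
     r₃ * 0 * (1 - 0 / k₃) + m₃₂ * 0 - (m₁₃ + m₂₃) * 0 = 0) ∧
    spectrum ℂ (J.map (Complex.ofReal))
      = insert (-r₁ : ℂ) (spectrum ℂ (B.map (Complex.ofReal))) ∧
    ((∀ μ ∈ spectrum ℂ (B.map (Complex.ofReal)), μ.re < 0) ↔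
      (r₂ + r₃ < m₁₂ + m₃₂ + m₁₃ + m₂₃ ∧
       (r₂ - m₁₂) * m₂₃ + (r₃ - m₁₃) * m₃₂ < (r₂ - m₁₂) * (r₃ - m₁₃))) := by
  have hcol : ∀ i : Fin 2, J.map Complex.ofReal i.succ 0 = 0 := by
    simp [hJ, Fin.forall_fin_two]
  have hcorner : J.map Complex.ofReal 0 0 = -r₁ := by simp [hJ]
  have hblock : (J.map Complex.ofReal).submatrix Fin.succ Fin.succ = B.map Complex.ofReal := by
    subst hJ hB
    ext i j
    fin_cases i <;> fin_cases j <;> rfl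
  refine ⟨⟨by rcases eq_or_ne k₁ 0 with hk | hk <;> simp [hk], by simp, by simp⟩, ?_, ?_⟩
  · rw [spectrum_eq_insert_of_col_zero _ hcol, hcorner, hblock]
  · rw [forall_spectrum_map_ofReal_re_neg_iff, hB, trace_fin_two_of, det_fin_two_of]
    constructor <;> rintro ⟨htr, hdet⟩ <;> constructor <;> linarith

open Matrix in
/-- Model (8) (`m₂₁ = m₃₁ = 0`): `M₂ = (k₁, 0, 0)` is an equilibrium; the
Jacobian there has eigenvalue `−r₁` together with the eigenvalues of the
2×2 block `B`, and both eigenvalues of `B` have negative real part iff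
`r₂ + r₃ < m₁₂ + m₃₂ + m₁₃ + m₂₃` and
`(r₂ − m₁₂)(r₃ − m₁₃) > (r₂ − m₁₂)m₂₃ + (r₃ − m₁₃)m₃₂`. -/
theorem model8_M2_stability
    (r₁ r₂ r₃ k₁ k₂ k₃ m₁₂ m₁₃ m₂₃ m₃₂ : ℝ)
    (hr₁ : 0 < r₁) (hr₂ : 0 < r₂) (hr₃ : 0 < r₃)
    (hk₁ : 0 < k₁) (hk₂ : 0 < k₂) (hk₃ : 0 < k₃)
    (hm₁₂ : 0 < m₁₂) (hm₁₃ : 0 < m₁₃) (hm₂₃ : 0 < m₂₃) (hm₃₂ : 0 < m₃₂)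
    (J : Matrix (Fin 3) (Fin 3) ℝ)
    (hJ : J = !![-r₁, m₁₂, m₁₃;
                 0, r₂ - m₁₂ - m₃₂, m₂₃;
                 0, m₃₂, r₃ - m₁₃ - m₂₃])
    (B : Matrix (Fin 2) (Fin 2) ℝ)
    (hB : B = !![r₂ - m₁₂ - m₃₂, m₂₃;
                 m₃₂, r₃ - m₁₃ - m₂₃]) :
    (r₁ * k₁ * (1 - k₁ / k₁) + m₁₂ * 0 + m₁₃ * 0 = 0 ∧
     r₂ * 0 * (1 - 0 / k₂) - (m₁₂ + m₃₂) * 0 + m₂₃ * 0 = 0 ∧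
     r₃ * 0 * (1 - 0 / k₃) + m₃₂ * 0 - (m₁₃ + m₂₃) * 0 = 0) ∧
    spectrum ℂ (J.map (Complex.ofReal))
      = insert (-r₁ : ℂ) (spectrum ℂ (B.map (Complex.ofReal))) ∧
    ((∀ μ ∈ spectrum ℂ (B.map (Complex.ofReal)), μ.re < 0) ↔
      (r₂ + r₃ < m₁₂ + m₃₂ + m₁₃ + m₂₃ ∧
       (r₂ - m₁₂) * m₂₃ + (r₃ - m₁₃) * m₃₂ < (r₂ - m₁₂) * (r₃ - m₁₃))) :=
  model8_M2_stability_general r₁ r₂ r₃ k₁ k₂ k₃ m₁₂ m₁₃ m₂₃ m₃₂ J hJ B hB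
end
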